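/- Let F be a field of characteristic 0 and s(y) = y + a₂y² + a₃y³ + ⋯ ∈ F[[y]]. Then the formal differential equation y·ψ'(y) = s(ψ(y)) has a solution ψ ∈ F[[y]] of the form ψ(y) = y + c₂y² + ⋯. -/

import Mathlib

/-!
Write `ψ = y + c₂y² + ⋯`. Since `y·ψ'` has coefficients `n·cₙ` and `ψ^k` lies in `(y^k)`, the
coefficient of `yⁿ` in `s(ψ)` is `cₙ` (coming from `a₁ψ`, as `a₁ = 1`) plus a quantity that
depends only on `c₁, …, cₙ₋₁`: for `k ≥ 2`, changing `ψ` modulo `yⁿ` changes `ψ^k` only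
modulo `y^(n+1)`. The equation at `yⁿ` therefore reads `(n - 1)·cₙ = [yⁿ] s(c₁y + ⋯ + cₙ₋₁yⁿ⁻¹)`,
which determines the `cₙ` recursively because `n - 1 ≠ 0` in characteristic `0`.
-/

open PowerSeries

/-- Formal composition `f(ψ)` of power series, defined coefficientwise (this is the usual
substitution when `ψ` has zero constant term). -/
noncomputable def PowerSeries.compose {F : Type*} [CommRing F]
    (f ψ : PowerSeries F) : PowerSeries F :=
  PowerSeries.mk fun n => PowerSeries.coeff n (Polynomial.aeval ψ (f.trunc (n + 1)))

open Finset

theorem pow_add_dvd_pow_succ_sub_pow_succ {R : Type*} [CommRing R] {x a b : R} {n : ℕ}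
    (ha : x ∣ a) (hb : x ∣ b) (hab : x ^ n ∣ a - b) (j : ℕ) :
    x ^ (n + j) ∣ a ^ (j + 1) - b ^ (j + 1) := by
  rw [← geom_sum₂_mul, pow_add, mul_comm (x ^ n)]
  refine mul_dvd_mul (dvd_sum fun i hi => ?_) hab
  have hsplit : x ^ j = x ^ i * x ^ (j + 1 - 1 - i) := by
    rw [← pow_add]
    congr 1
    grind
  rw [hsplit]
  exact mul_dvd_mul (pow_dvd_pow_of_dvd ha i) (pow_dvd_pow_of_dvd hb _)

namespace PowerSeries

variable {R : Type*} [CommRing R]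

theorem coeff_compose (f ψ : R⟦X⟧) (n : ℕ) :
    coeff n (f.compose ψ) = ∑ k ∈ range (n + 1), coeff k f * coeff n (ψ ^ k) := by
  simp only [compose, coeff_mk, trunc_apply, map_sum, Polynomial.aeval_monomial,
    ← range_eq_Ico, algebraMap_apply, Algebra.algebraMap_self_apply, ← smul_eq_C_mul,
    LinearMap.map_smul, smul_eq_mul]

theorem coeff_compose_eq_of_X_pow_dvd_sub (f : R⟦X⟧) {ψ φ : R⟦X⟧} {n : ℕ}
    (hψ : X ∣ ψ) (hφ : X ∣ φ) (hψφ : X ^ n ∣ ψ - φ) :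
    coeff n (f.compose ψ) = coeff n (f.compose φ) + coeff 1 f * (coeff n ψ - coeff n φ) := by
  rw [← sub_eq_iff_eq_add', coeff_compose, coeff_compose, ← sum_sub_distrib]
  simp_rw [← mul_sub]
  rw [sum_eq_single 1]
  · simp
  · rintro (_ | _ | j) - hj
    · simp
    · contradiction
    · have hpow := pow_add_dvd_pow_succ_sub_pow_succ hψ hφ hψφ (j + 1)
      rw [X_pow_dvd_iff] at hpow
      rw [← map_sub, hpow n (by omega), mul_zero]
  · intro h
    obtain rfl : n = 0 := by simpa using h
    rw [X_dvd_iff] at hψ hφ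
    simp [hψ, hφ]

theorem coeff_compose_eq_coeff_compose_trunc_add (f : R⟦X⟧) {ψ : R⟦X⟧}
    (hψ : constantCoeff ψ = 0) (n : ℕ) :
    coeff n (f.compose ψ) = coeff n (f.compose (trunc n ψ)) + coeff 1 f * coeff n ψ := by
  have hdvd : X ^ n ∣ ψ - (trunc n ψ : R⟦X⟧) := by
    rw [X_pow_dvd_iff]
    intro m hm
    rw [map_sub, coeff_coe_trunc_of_lt hm, sub_self]
  have hX : X ∣ (trunc n ψ : R⟦X⟧) := by
    rw [X_dvd_iff, ← coeff_zero_eq_constantCoeff_apply, Polynomial.coeff_coe, coeff_trunc]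
    split_ifs <;> simp [hψ]
  rw [coeff_compose_eq_of_X_pow_dvd_sub f (X_dvd_iff.mpr hψ) hX hdvd, Polynomial.coeff_coe,
    coeff_trunc, if_neg (lt_irrefl n), sub_zero]

theorem coeff_X_mul_derivative (f : R⟦X⟧) (n : ℕ) :
    coeff n (X * d⁄dX R f) = n * coeff n f := by
  rcases n with _ | n
  · simp
  · rw [coeff_succ_X_mul, coeff_derivative]
    push_cast
    ring

end PowerSeries

section

variable {F : Type*} [Field F]

/-- The inner series is the truncation of the solution below degree `n + 2`, written through the
earlier values so that the recursion is well founded. -/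
noncomputable def odeSolutionCoeff (s : F⟦X⟧) : ℕ → F
  | 0 => 0
  | 1 => 1
  | n + 2 => (n + 1 : F)⁻¹ *
      coeff (n + 2) (s.compose (mk fun k => if _ : k < n + 2 then odeSolutionCoeff s k else 0))

noncomputable def odeSolution (s : F⟦X⟧) : F⟦X⟧ :=
  mk (odeSolutionCoeff s)

theorem constantCoeff_odeSolution (s : F⟦X⟧) : constantCoeff (odeSolution s) = 0 := by
  rw [← coeff_zero_eq_constantCoeff_apply, odeSolution, coeff_mk, odeSolutionCoeff]

theorem coeff_one_odeSolution (s : F⟦X⟧) : coeff 1 (odeSolution s) = 1 := by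
  rw [odeSolution, coeff_mk, odeSolutionCoeff]

theorem coeff_odeSolution_add_two [CharZero F] (s : F⟦X⟧) (n : ℕ) :
    (n + 1 : F) * coeff (n + 2) (odeSolution s) =
      coeff (n + 2) (s.compose (trunc (n + 2) (odeSolution s))) := by
  rw [odeSolution, coeff_mk, odeSolutionCoeff, mul_inv_cancel_left₀ (Nat.cast_add_one_ne_zero n)]
  congr
  ext k
  simp [coeff_trunc]

end

/-- Let `F` be a field of characteristic `0` and
`s(y) = y + a₂y² + a₃y³ + ⋯ ∈ F[[y]]`.  Then the formal differential equation
`y·ψ'(y) = s(ψ(y))` has a solution `ψ ∈ F[[y]]` of the form `ψ(y) = y + c₂y² + ⋯`. -/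
theorem formal_ode_order_one_solvable
    (F : Type*) [Field F] [CharZero F] (s : PowerSeries F)
    (hs0 : PowerSeries.constantCoeff s = 0)
    (hs1 : PowerSeries.coeff 1 s = 1) :
    ∃ ψ : PowerSeries F,
      PowerSeries.constantCoeff ψ = 0 ∧
      PowerSeries.coeff 1 ψ = 1 ∧
      PowerSeries.X * ψ.derivativeFun = PowerSeries.compose s ψ := by
  refine ⟨odeSolution s, constantCoeff_odeSolution s, coeff_one_odeSolution s, ?_⟩
  ext n
  change coeff n (X * d⁄dX F _) = _
  rw [coeff_X_mul_derivative,
    coeff_compose_eq_coeff_compose_trunc_add s (constantCoeff_odeSolution s), hs1, one_mul]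
  rcases n with _ | _ | n
  · simp [coeff_compose, hs0, constantCoeff_odeSolution]
  · simp [coeff_compose, trunc_one_left, sum_range_succ, coeff_one]
  · rw [← coeff_odeSolution_add_two]
    push_cast
    ring
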